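/- Let 0 < λ < 1 and let γ be an admissible LCFS pair configuration. Then the series ∑_{x1,y1,x2,y2 ≥ 1} H(x1,y1,x2,y2) converges absolutely and equals λ − 2·γ^{pos}(1), where γ^{pos}(1) := ∑_{x2≥1} γ(1,x2). Consequently, if H(x1,y1,x2,y2) = 0 for all indices, then q(0) = 1 − λ. -/

import Mathlib

open scoped BigOperators

/-- `δ(x1,y1,x2) = ∑_{y2} δ(x1,y1,x2,y2)`. -/
noncomputable def mar3 (del : ℕ → ℕ → ℕ → ℕ → ℝ) (x1 y1 x2 : ℕ) : ℝ :=
  ∑' y2 : ℕ, del x1 y1 x2 y2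

/-- `δ(x1,x2) = ∑_{y1,y2} δ(x1,y1,x2,y2)`. -/
noncomputable def mar2 (del : ℕ → ℕ → ℕ → ℕ → ℝ) (x1 x2 : ℕ) : ℝ :=
  ∑' yy : ℕ × ℕ, del x1 yy.1 x2 yy.2

/-- `q(x) = 2δ(1,x)` for `x ≥ 1`, and `q(0) = 1 − ∑_{x≥1} q(x)`. -/
noncomputable def qPos (del : ℕ → ℕ → ℕ → ℕ → ℝ) (x : ℕ) : ℝ :=
  if x = 0 then 1 - ∑' z : ℕ, 2 * mar2 del 1 (z + 1) else 2 * mar2 del 1 x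

/-- `κ(x_a,x_b) = ∑_{x'=1}^{x_a} δ(x',1,x_b)/δ(x',x_b)`. -/
noncomputable def kap (del : ℕ → ℕ → ℕ → ℕ → ℝ) (xa xb : ℕ) : ℝ :=
  ∑ x' ∈ Finset.Icc 1 xa, mar3 del x' 1 xb / mar2 del x' xb

/-- An admissible position/queue-length pair configuration: nonnegative,
vanishing outside `1 ≤ x1 ≤ x2`, `1 ≤ y1 ≤ y2`, symmetric in the two replicas,
with finite first moment of the queue length and positive marginals. -/
def AdmissibleQuad (del : ℕ → ℕ → ℕ → ℕ → ℝ) : Prop :=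
  (∀ x1 y1 x2 y2, 0 ≤ del x1 y1 x2 y2) ∧
  (∀ x1 y1 x2 y2, x1 = 0 ∨ y1 = 0 ∨ x2 = 0 ∨ y2 = 0 ∨ x2 < x1 ∨ y2 < y1 →
      del x1 y1 x2 y2 = 0) ∧
  (∀ x1 y1 x2 y2, del x1 y1 x2 y2 = del y1 x1 y2 x2) ∧
  Summable (fun v : ℕ × ℕ × ℕ × ℕ =>
      (v.2.2.1 : ℝ) * del v.1 v.2.1 v.2.2.1 v.2.2.2) ∧
  (∀ x1 x2 : ℕ, 1 ≤ x1 → x1 ≤ x2 → 0 < mar2 del x1 x2)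

/-- The LCFS pair drift `H(x1,y1,x2,y2)`, where `φ = kap`. -/
noncomputable def HLCFS (lam : ℝ) (gam : ℕ → ℕ → ℕ → ℕ → ℝ)
    (x1 y1 x2 y2 : ℕ) : ℝ :=
  lam * qPos gam (x2 - 1) * qPos gam (y2 - 1) *
      (if x1 = 1 ∧ y1 = 1 then 1 else 0)
    - 4 * lam * gam x1 y1 x2 y2
    + 2 * lam * gam (x1 - 1) y1 (x2 - 1) y2 + 2 * lam * gam x1 (y1 - 1) x2 (y2 - 1)
    - gam x1 y1 x2 y2 *
        (2 + kap gam x2 x2 - mar3 gam x1 1 x2 / mar2 gam x1 x2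
          + kap gam y2 y2 - mar3 gam y1 1 y2 / mar2 gam y1 y2)
    + gam (x1 + 1) y1 (x2 + 1) y2 * (1 + kap gam x1 (x2 + 1))
    + gam x1 (y1 + 1) x2 (y2 + 1) * (1 + kap gam y1 (y2 + 1))
    + gam x1 y1 (x2 + 1) y2 * (kap gam (x2 + 1) (x2 + 1) - kap gam x1 (x2 + 1))
    + gam x1 y1 x2 (y2 + 1) * (kap gam (y2 + 1) (y2 + 1) - kap gam y1 (y2 + 1))


/-!
Write the drift at `v + 1` as the arrival term, two terms `2λ (γ(shifted) - γ)` whose sums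
cancel because `γ` vanishes off `1 ≤ x1 ≤ x2, 1 ≤ y1 ≤ y2`, and the service flux of each
replica. Reindex the two inflow terms of a replica, `γ(x1+1, ·, x2+1, ·) (1 + φ(x1, x2+1))` and
`γ(x1, ·, x2+1, ·) (φ(x2+1, x2+1) - φ(x1, x2+1))`, by the state they enter. Since
`φ(x1, x2) - φ(x1 - 1, x2) = γ(x1,1,x2)/γ(x1,x2)`, the two inflow coefficients of a state add up to
its outflow coefficient `1 + φ(x2, x2) - γ(x1,1,x2)/γ(x1,x2)`. The only exception is `x1 = 1`,
where nothing flows in, so the service flux of each replica sums to `-∑ γ(1, x2)`. The arrival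
term sums to `λ (∑ q)² = λ`. Every series converges absolutely because `0 ≤ φ(a, b) ≤ a`
and `γ` has a finite first moment.
-/

theorem hasSum_comp_add_iff {M α : Type*} [AddCommMagma M] [LE M] [ExistsAddOfLE M]
    [IsRightCancelAdd M] [AddCommMonoid α] [TopologicalSpace α] {f : M → α} {a : α} {e : M}
    (hf : ∀ w, ¬e ≤ w → f w = 0) : HasSum (fun v => f (v + e)) a ↔ HasSum f a := by
  refine (add_left_injective e).hasSum_iff fun w hw => hf w fun hew => hw ?_
  obtain ⟨c, rfl⟩ := exists_add_of_le hew
  exact ⟨c, add_comm c e⟩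

namespace LCFS

/-- Indices `(x1, y1, x2, y2)`. -/
abbrev V : Type := ℕ × ℕ × ℕ × ℕ

noncomputable def gamV (gam : ℕ → ℕ → ℕ → ℕ → ℝ) (w : V) : ℝ :=
  gam w.1 w.2.1 w.2.2.1 w.2.2.2

noncomputable def flux (gam : ℕ → ℕ → ℕ → ℕ → ℝ) (c : ℕ → ℕ → ℝ) (w : V) : ℝ :=
  gamV gam w * c w.1 w.2.2.1

noncomputable def atHead (gam : ℕ → ℕ → ℕ → ℕ → ℝ) (w : V) : ℝ :=
  if w.1 = 1 then gamV gam w else 0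

noncomputable def ratio (gam : ℕ → ℕ → ℕ → ℕ → ℝ) (x1 x2 : ℕ) : ℝ :=
  mar3 gam x1 1 x2 / mar2 gam x1 x2

variable {gam : ℕ → ℕ → ℕ → ℕ → ℝ}

section Admissible

variable (hgam : AdmissibleQuad gam)
include hgam

theorem _root_.AdmissibleQuad.gamV_nonneg (w : V) : 0 ≤ gamV gam w :=
  hgam.1 _ _ _ _

theorem _root_.AdmissibleQuad.le_of_gamV_ne_zero {w : V} (h : gamV gam w ≠ 0) :
    1 ≤ w.1 ∧ 1 ≤ w.2.1 ∧ w.1 ≤ w.2.2.1 ∧ w.2.1 ≤ w.2.2.2 := by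
  by_contra hc
  exact h (hgam.2.1 _ _ _ _ (by omega))

theorem _root_.AdmissibleQuad.one_le_of_gamV_ne_zero {w : V} (h : gamV gam w ≠ 0) : 1 ≤ w := by
  have := hgam.le_of_gamV_ne_zero h
  obtain ⟨a, b, c, d⟩ := w
  dsimp only at this
  show ((1, 1, 1, 1) : V) ≤ (a, b, c, d)
  simp only [Prod.mk_le_mk]
  omega

theorem _root_.AdmissibleQuad.summable_gamV : Summable (gamV gam) := by
  refine .of_nonneg_of_le hgam.gamV_nonneg (fun w => ?_) hgam.2.2.2.1
  show gamV gam w ≤ w.2.2.1 * gamV gam w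
  by_cases hw : gamV gam w = 0
  · simp [hw]
  · have hx2 : (1 : ℝ) ≤ w.2.2.1 := by
      have := hgam.le_of_gamV_ne_zero hw
      exact_mod_cast (by omega : 1 ≤ w.2.2.1)
    exact le_mul_of_one_le_left (hgam.gamV_nonneg w) hx2

theorem _root_.AdmissibleQuad.summable_flux {c : ℕ → ℕ → ℝ}
    (hc : ∀ x1 x2, 1 ≤ x1 → x1 ≤ x2 → |c x1 x2| ≤ x2 + 1) : Summable (flux gam c) := by
  have hmoment : Summable fun w : V => ((w.2.2.1 : ℝ) + 1) * gamV gam w :=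
    (hgam.2.2.2.1.add hgam.summable_gamV).congr fun w => by simp only [gamV]; ring
  refine hmoment.of_norm_bounded fun w => ?_
  rw [flux, norm_mul, Real.norm_of_nonneg (hgam.gamV_nonneg w), mul_comm]
  by_cases hw : gamV gam w = 0
  · simp [hw]
  · have := hgam.le_of_gamV_ne_zero hw
    exact mul_le_mul_of_nonneg_right (by simpa [Real.norm_eq_abs] using hc _ _ this.1 this.2.2.1)
      (hgam.gamV_nonneg w)

theorem _root_.AdmissibleQuad.hasSum_gamV_comp_add {e : V} (he : e ≤ 1) :
    HasSum (fun v => gamV gam (v + e)) (∑' w, gamV gam w) := by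
  refine (hasSum_comp_add_iff fun w hw => ?_).2 hgam.summable_gamV.hasSum
  by_contra hne
  exact hw (he.trans (hgam.one_le_of_gamV_ne_zero hne))

end Admissible

theorem kap_succ (a b : ℕ) : kap gam (a + 1) b = kap gam a b + ratio gam (a + 1) b :=
  Finset.sum_Icc_succ_top (Nat.le_add_left 1 a) _

/-- Rates are indexed by the state whose mass they weight: in the drift at `(x1, ·, x2, ·)` the
mass at `(x1 + 1, ·, x2 + 1, ·)` enters with `inRate (x1 + 1) (x2 + 1)`, the mass at
`(x1, ·, x2 + 1, ·)` with `growRate x1 (x2 + 1)`, and the mass at `(x1, ·, x2, ·)` leaves with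
`outRate x1 x2`. -/
noncomputable def outRate (gam : ℕ → ℕ → ℕ → ℕ → ℝ) (x1 x2 : ℕ) : ℝ :=
  1 + kap gam x2 x2 - ratio gam x1 x2

noncomputable def inRate (gam : ℕ → ℕ → ℕ → ℕ → ℝ) (x1 x2 : ℕ) : ℝ :=
  1 + kap gam (x1 - 1) x2

noncomputable def growRate (gam : ℕ → ℕ → ℕ → ℕ → ℝ) (x1 x2 : ℕ) : ℝ :=
  kap gam x2 x2 - kap gam x1 x2

theorem outRate_eq_inRate_add_growRate {x1 : ℕ} (h : 1 ≤ x1) (x2 : ℕ) :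
    outRate gam x1 x2 = inRate gam x1 x2 + growRate gam x1 x2 := by
  obtain ⟨k, rfl⟩ := Nat.exists_eq_add_of_le' h
  rw [outRate, inRate, growRate, Nat.add_sub_cancel, kap_succ]
  ring

section Bounds

variable (hgam : AdmissibleQuad gam)
include hgam

theorem _root_.AdmissibleQuad.mar3_le_mar2 (x1 x2 : ℕ) : mar3 gam x1 1 x2 ≤ mar2 gam x1 x2 := by
  have hslice : Summable fun yy : ℕ × ℕ => gam x1 yy.1 x2 yy.2 :=
    hgam.summable_gamV.comp_injective (i := fun yy : ℕ × ℕ => ((x1, yy.1, x2, yy.2) : V))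
      fun p q h => by simp_all [Prod.ext_iff]
  exact hslice.comp_injective (i := fun y2 => (1, y2)) (Prod.mk_right_injective 1)
    |>.tsum_le_tsum_of_inj _ (Prod.mk_right_injective 1) (fun _ _ => hgam.1 _ _ _ _)
      (fun _ => le_rfl) hslice

theorem _root_.AdmissibleQuad.ratio_mem_Icc (x1 x2 : ℕ) : ratio gam x1 x2 ∈ Set.Icc 0 1 :=
  ⟨div_nonneg (tsum_nonneg fun _ => hgam.1 _ _ _ _) (tsum_nonneg fun _ => hgam.1 _ _ _ _),
    div_le_one_of_le₀ (hgam.mar3_le_mar2 x1 x2) (tsum_nonneg fun _ => hgam.1 _ _ _ _)⟩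

theorem _root_.AdmissibleQuad.kap_mem_Icc (a b : ℕ) : kap gam a b ∈ Set.Icc 0 (a : ℝ) := by
  have h := Finset.sum_le_sum fun x' (_ : x' ∈ Finset.Icc 1 a) => (hgam.ratio_mem_Icc x' b).2
  refine ⟨Finset.sum_nonneg fun x' _ => (hgam.ratio_mem_Icc x' b).1, ?_⟩
  simpa [kap, ratio] using h

theorem _root_.AdmissibleQuad.abs_outRate_le (x1 x2 : ℕ) : |outRate gam x1 x2| ≤ x2 + 1 := by
  obtain ⟨hk0, hk1⟩ := hgam.kap_mem_Icc x2 x2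
  obtain ⟨hr0, hr1⟩ := hgam.ratio_mem_Icc x1 x2
  rw [outRate, abs_le]
  constructor <;> linarith

theorem _root_.AdmissibleQuad.abs_inRate_le {x1 x2 : ℕ} (h1 : 1 ≤ x1) (h : x1 ≤ x2) :
    |inRate gam x1 x2| ≤ x2 + 1 := by
  obtain ⟨hk0, hk1⟩ := hgam.kap_mem_Icc (x1 - 1) x2
  have : ((x1 - 1 : ℕ) : ℝ) ≤ x2 := by exact_mod_cast (by omega : x1 - 1 ≤ x2)
  rw [inRate, abs_le]
  constructor <;> linarith

theorem _root_.AdmissibleQuad.abs_growRate_le {x1 x2 : ℕ} (h : x1 ≤ x2) :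
    |growRate gam x1 x2| ≤ x2 + 1 := by
  obtain ⟨hk0, hk1⟩ := hgam.kap_mem_Icc x2 x2
  obtain ⟨hl0, hl1⟩ := hgam.kap_mem_Icc x1 x2
  have : (x1 : ℝ) ≤ x2 := by exact_mod_cast h
  rw [growRate, abs_le]
  constructor <;> linarith

end Bounds

noncomputable def arrival (lam : ℝ) (gam : ℕ → ℕ → ℕ → ℕ → ℝ) (v : V) : ℝ :=
  lam * qPos gam v.2.2.1 * qPos gam v.2.2.2 * if v.1 = 0 ∧ v.2.1 = 0 then 1 else 0

noncomputable def xFlux (gam : ℕ → ℕ → ℕ → ℕ → ℝ) (v : V) : ℝ :=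
  -flux gam (outRate gam) (v + 1) + flux gam (inRate gam) (v + (2, 1, 2, 1))
    + flux gam (growRate gam) (v + (1, 1, 2, 1))

def swapV : V ≃ V where
  toFun w := (w.2.1, w.1, w.2.2.2, w.2.2.1)
  invFun w := (w.2.1, w.1, w.2.2.2, w.2.2.1)
  left_inv _ := rfl
  right_inv _ := rfl

section Sums

variable (hgam : AdmissibleQuad gam)
include hgam

theorem _root_.AdmissibleQuad.flux_outRate_eq :
    flux gam (outRate gam) = flux gam (inRate gam) + flux gam (growRate gam) := by
  funext w
  by_cases hw : gamV gam w = 0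
  · simp [flux, hw]
  · simp only [flux, Pi.add_apply, ← mul_add]
    rw [outRate_eq_inRate_add_growRate (hgam.le_of_gamV_ne_zero hw).1]

theorem _root_.AdmissibleQuad.summable_atHead : Summable (atHead gam) :=
  .of_nonneg_of_le (fun w => ite_nonneg (hgam.gamV_nonneg w) le_rfl)
    (fun w => by unfold atHead; split_ifs <;> simp [hgam.gamV_nonneg w]) hgam.summable_gamV

theorem _root_.AdmissibleQuad.hasSum_mar2_one_succ :
    HasSum (fun x2 => mar2 gam 1 (x2 + 1)) (∑' w, atHead gam w) := by
  let ι : ℕ × (ℕ × ℕ) → V := fun p => (1, p.2.1, p.1 + 1, p.2.2)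
  have hι : Function.Injective ι := fun p q h => by simp_all [ι, Prod.ext_iff]
  have hrange : ∀ w ∉ Set.range ι, atHead gam w = 0 := by
    rintro ⟨a, b, c, d⟩ hw
    by_contra hne
    have h1 : a = 1 := by by_contra h; simp [atHead, h] at hne
    have := hgam.le_of_gamV_ne_zero (w := (a, b, c, d)) (by simpa [atHead, h1] using hne)
    dsimp only at this
    subst h1
    exact hw ⟨(c - 1, b, d), by simp only [ι, Prod.mk.injEq, and_true, true_and]; omega⟩
  have hι := (hι.hasSum_iff hrange).2 hgam.summable_atHead.hasSum
  exact hι.prod_fiberwise fun x2 => (hι.summable.prod_factor x2).hasSum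

theorem _root_.AdmissibleQuad.hasSum_atHead :
    HasSum (atHead gam) (∑' x2, mar2 gam 1 (x2 + 1)) :=
  hgam.hasSum_mar2_one_succ.tsum_eq ▸ hgam.summable_atHead.hasSum

theorem _root_.AdmissibleQuad.hasSum_qPos : HasSum (qPos gam) 1 := by
  refine (hasSum_nat_add_iff' 1).1 ?_
  simpa [qPos, tsum_mul_left] using (hgam.hasSum_mar2_one_succ.summable.hasSum.mul_left 2)

theorem _root_.AdmissibleQuad.hasSum_arrival (lam : ℝ) : HasSum (arrival lam gam) lam := by
  have hq := hgam.hasSum_qPos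
  have hqq := hq.mul hq (summable_mul_of_summable_norm hq.summable.norm hq.summable.norm)
  let ι : ℕ × ℕ → V := fun p => (0, 0, p.1, p.2)
  have hι : Function.Injective ι := fun p q h => by simp_all [ι, Prod.ext_iff]
  have hrange : ∀ w ∉ Set.range ι, arrival lam gam w = 0 := by
    rintro ⟨a, b, c, d⟩ hw
    have : ¬(a = 0 ∧ b = 0) := by rintro ⟨rfl, rfl⟩; exact hw ⟨(c, d), rfl⟩
    simp [arrival, this]
  have hlam := hqq.mul_left lam
  rw [mul_one, mul_one] at hlam
  refine (hι.hasSum_iff hrange).1 (hlam.congr_fun fun p => ?_)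
  simp [arrival, ι, mul_assoc]

theorem _root_.AdmissibleQuad.hasSum_xFlux :
    HasSum (xFlux gam) (-∑' x2, mar2 gam 1 (x2 + 1)) := by
  set P := ∑' x2, mar2 gam 1 (x2 + 1)
  have hin := (hgam.summable_flux fun _ _ => hgam.abs_inRate_le).hasSum
  have hgrow := (hgam.summable_flux fun _ _ _ => hgam.abs_growRate_le).hasSum
  set I := ∑' w, flux gam (inRate gam) w
  set G := ∑' w, flux gam (growRate gam) w
  have hout : HasSum (fun v => flux gam (outRate gam) (v + 1)) (I + G) := by
    refine (hasSum_comp_add_iff fun w hw => ?_).2 (hgam.flux_outRate_eq ▸ hin.add hgrow)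
    by_contra hne
    exact hw (hgam.one_le_of_gamV_ne_zero (left_ne_zero_of_mul hne))
  have hin' : HasSum (fun v => flux gam (inRate gam) (v + (2, 1, 2, 1))) (I - P) := by
    refine ((hasSum_comp_add_iff (e := ((2, 1, 2, 1) : V)) fun w hw => ?_).2
      (hin.sub hgam.hasSum_atHead)).congr_fun fun v => by simp [atHead]
    by_cases hg : gamV gam w = 0
    · simp [flux, atHead, hg]
    have := hgam.le_of_gamV_ne_zero hg
    obtain ⟨a, b, c, d⟩ := w
    dsimp only at this
    obtain rfl : a = 1 := by by_contra; exact hw (by simp only [Prod.mk_le_mk]; omega)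
    simp [flux, atHead, inRate, kap]
  have hgrow' : HasSum (fun v => flux gam (growRate gam) (v + (1, 1, 2, 1))) G := by
    refine (hasSum_comp_add_iff fun w hw => ?_).2 hgrow
    by_cases hg : gamV gam w = 0
    · simp [flux, hg]
    have := hgam.le_of_gamV_ne_zero hg
    obtain ⟨a, b, c, d⟩ := w
    dsimp only at this
    obtain ⟨rfl, rfl⟩ : a = 1 ∧ c = 1 := by
      by_contra; exact hw (by simp only [Prod.mk_le_mk]; omega)
    simp [flux, growRate]
  exact (by ring : -(I + G) + (I - P) + G = -P) ▸ (hout.neg.add hin').add hgrow'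

theorem _root_.AdmissibleQuad.HLCFS_succ_eq (lam : ℝ) (v : V) :
    HLCFS lam gam (v.1 + 1) (v.2.1 + 1) (v.2.2.1 + 1) (v.2.2.2 + 1) =
      arrival lam gam v + 2 * lam * (gamV gam (v + (0, 1, 0, 1)) - gamV gam (v + 1))
        + 2 * lam * (gamV gam (v + (1, 0, 1, 0)) - gamV gam (v + 1))
        + xFlux gam v + xFlux gam (swapV v) := by
  obtain ⟨a, b, c, d⟩ := v
  simp only [HLCFS, arrival, xFlux, flux, gamV, swapV, Equiv.coe_fn_mk, outRate, inRate, growRate,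
    ratio]
  simp only [Prod.mk_add_mk, Prod.fst_add, Prod.snd_add, Prod.fst_one, Prod.snd_one, add_assoc,
    Nat.reduceAdd, add_zero, add_tsub_cancel_right, Nat.reduceSubDiff, Nat.add_eq_right]
  obtain ⟨-, -, hsymm, -, -⟩ := hgam
  rw [hsymm (b + 1) (a + 1) (d + 1) (c + 1), hsymm (b + 2) (a + 1) (d + 2) (c + 1),
    hsymm (b + 1) (a + 1) (d + 2) (c + 1)]
  split_ifs <;> ring

theorem _root_.AdmissibleQuad.hasSum_HLCFS_succ (lam : ℝ) :
    HasSum (fun v : V => HLCFS lam gam (v.1 + 1) (v.2.1 + 1) (v.2.2.1 + 1) (v.2.2.2 + 1))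
      (lam - 2 * ∑' x2, mar2 gam 1 (x2 + 1)) := by
  have hflow (e : V) (he : e ≤ 1) :
      HasSum (fun v => 2 * lam * (gamV gam (v + e) - gamV gam (v + 1))) 0 := by
    simpa using ((hgam.hasSum_gamV_comp_add he).sub (hgam.hasSum_gamV_comp_add le_rfl)).mul_left
      (2 * lam)
  have hx := hgam.hasSum_xFlux
  have h := (((hgam.hasSum_arrival lam).add (hflow (0, 1, 0, 1) (by decide))).add
    (hflow (1, 0, 1, 0) (by decide))).add hx |>.add (swapV.hasSum_iff.2 hx)
  convert h.congr_fun (hgam.HLCFS_succ_eq lam) using 1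
  ring

end Sums

end LCFS

theorem lcfs_pair_drift_total_sum_general
    (lam : ℝ) (gam : ℕ → ℕ → ℕ → ℕ → ℝ) (hgam : AdmissibleQuad gam) :
    Summable (fun v : ℕ × ℕ × ℕ × ℕ =>
      |HLCFS lam gam (v.1 + 1) (v.2.1 + 1) (v.2.2.1 + 1) (v.2.2.2 + 1)|) ∧
    (∑' v : ℕ × ℕ × ℕ × ℕ,
        HLCFS lam gam (v.1 + 1) (v.2.1 + 1) (v.2.2.1 + 1) (v.2.2.2 + 1)) =
      lam - 2 * ∑' x2 : ℕ, mar2 gam 1 (x2 + 1) ∧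
    ((∀ x1 y1 x2 y2 : ℕ, 1 ≤ x1 → 1 ≤ y1 → 1 ≤ x2 → 1 ≤ y2 →
        HLCFS lam gam x1 y1 x2 y2 = 0) →
      qPos gam 0 = 1 - lam) := by
  have h := hgam.hasSum_HLCFS_succ lam
  refine ⟨h.summable.abs, h.tsum_eq, fun hzero => ?_⟩
  have hP : lam - 2 * ∑' x2, mar2 gam 1 (x2 + 1) = 0 :=
    h.unique (hasSum_zero.congr_fun fun _ => hzero _ _ _ _ le_add_self le_add_self le_add_self
      le_add_self)
  rw [qPos, if_pos rfl, tsum_mul_left]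
  linarith

theorem lcfs_pair_drift_total_sum
    (lam : ℝ) (hlam0 : 0 < lam) (hlam1 : lam < 1)
    (gam : ℕ → ℕ → ℕ → ℕ → ℝ) (hgam : AdmissibleQuad gam) :
    Summable (fun v : ℕ × ℕ × ℕ × ℕ =>
      |HLCFS lam gam (v.1 + 1) (v.2.1 + 1) (v.2.2.1 + 1) (v.2.2.2 + 1)|) ∧
    (∑' v : ℕ × ℕ × ℕ × ℕ,
        HLCFS lam gam (v.1 + 1) (v.2.1 + 1) (v.2.2.1 + 1) (v.2.2.2 + 1)) =
      lam - 2 * ∑' x2 : ℕ, mar2 gam 1 (x2 + 1) ∧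
    ((∀ x1 y1 x2 y2 : ℕ, 1 ≤ x1 → 1 ≤ y1 → 1 ≤ x2 → 1 ≤ y2 →
        HLCFS lam gam x1 y1 x2 y2 = 0) →
      qPos gam 0 = 1 - lam) :=
  lcfs_pair_drift_total_sum_general lam gam hgam
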